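/- Let M be an infinite, bounded, uniformly discrete metric space. Then there exist a > 0 and a sequence (u_i)_{i∈ℕ} in M such that a·(i−1)/i ≤ d(u_i, u_j) ≤ a·(i+1)/i for all i, j ∈ ℕ with i < j. -/

import Mathlib

open Metric Set Filter NNReal

noncomputable section

/-- The topological dual of a normed space (Mathlib's former `NormedSpace.Dual`). -/
abbrev NormedSpace.Dual (𝕜 : Type*) [RCLike 𝕜] (E : Type*) [SeminormedAddCommGroup E]
    [NormedSpace 𝕜 E] : Type _ :=
  E →L[𝕜] 𝕜

namespace DeltaPaper

/-! ### Generic Banach space notions -/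

variable {X : Type*} [NormedAddCommGroup X] [NormedSpace ℝ X]

/-- `x` is a Daugavet-point: every slice of the unit ball contains, for every `ε > 0`,
an element at distance at least `2 - ε` from `x`. -/
def IsDaugavetPoint (x : X) : Prop :=
  ∀ (φ : NormedSpace.Dual ℝ X) (α : ℝ), ‖φ‖ = 1 → 0 < α → ∀ ε > 0,
    ∃ y : X, ‖y‖ ≤ 1 ∧ 1 - α < φ y ∧ 2 - ε ≤ ‖x - y‖

/-- `x` is a Δ-point: every slice of the unit ball containing `x` contains, for every
`ε > 0`, an element at distance at least `2 - ε` from `x`. -/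
def IsDeltaPoint (x : X) : Prop :=
  ∀ (φ : NormedSpace.Dual ℝ X) (α : ℝ), ‖φ‖ = 1 → 0 < α → 1 - α < φ x → ∀ ε > 0,
    ∃ y : X, ‖y‖ ≤ 1 ∧ 1 - α < φ y ∧ 2 - ε ≤ ‖x - y‖

/-- `x*` is a w*-Daugavet-point of the dual of `X`. -/
def IsWeakStarDaugavetPoint (f : NormedSpace.Dual ℝ X) : Prop :=
  ∀ (x : X) (α : ℝ), ‖x‖ = 1 → 0 < α → ∀ ε > 0,
    ∃ g : NormedSpace.Dual ℝ X, ‖g‖ ≤ 1 ∧ 1 - α < g x ∧ 2 - ε ≤ ‖f - g‖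

/-- `x*` is a w*-Δ-point of the dual of `X`. -/
def IsWeakStarDeltaPoint (f : NormedSpace.Dual ℝ X) : Prop :=
  ∀ (x : X) (α : ℝ), ‖x‖ = 1 → 0 < α → 1 - α < f x → ∀ ε > 0,
    ∃ g : NormedSpace.Dual ℝ X, ‖g‖ ≤ 1 ∧ 1 - α < g x ∧ 2 - ε ≤ ‖f - g‖

/-- `x` is a denting point of the unit ball: it lies in slices of the unit ball of
arbitrarily small diameter. -/
def IsDentingPoint (x : X) : Prop :=
  ‖x‖ ≤ 1 ∧ ∀ ε > 0, ∃ (φ : NormedSpace.Dual ℝ X) (α : ℝ), ‖φ‖ = 1 ∧ 0 < α ∧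
    1 - α < φ x ∧ Metric.diam {y : X | ‖y‖ ≤ 1 ∧ 1 - α < φ y} < ε

/-- The Kuratowski measure of non-compactness of a set: the infimum of all `ε > 0`
such that the set can be covered by finitely many sets of diameter less than `ε`. -/
def kuratowski {Y : Type*} [PseudoMetricSpace Y] (A : Set Y) : ℝ :=
  sInf {ε : ℝ | 0 < ε ∧ ∃ 𝒞 : Finset (Set Y), (A ⊆ ⋃ B ∈ 𝒞, B) ∧ ∀ B ∈ 𝒞, Metric.diam B < ε}

/-! ### The space of Lipschitz functions vanishing at a base point -/

variable {M : Type*} [PseudoMetricSpace M]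

/-- The least Lipschitz constant of a function. -/
def lipConst (f : M → ℝ) : ℝ≥0 := sInf {K | LipschitzWith K f}

theorem lipschitzWith_lipConst {f : M → ℝ} (hf : ∃ K, LipschitzWith K f) :
    LipschitzWith (lipConst f) f := by
  obtain ⟨K₀, hK₀⟩ := hf
  rw [lipschitzWith_iff_dist_le_mul]
  intro x y
  rcases le_or_gt (dist x y) 0 with h | h
  · have h0 : dist x y = 0 := le_antisymm h dist_nonneg
    have := hK₀.dist_le_mul x y
    rw [h0, mul_zero] at this ⊢
    exact this
  · rw [← div_le_iff₀ h]
    have hnn : 0 ≤ dist (f x) (f y) / dist x y := by positivity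
    rw [← Real.coe_toNNReal _ hnn, NNReal.coe_le_coe]
    refine le_csInf ⟨K₀, hK₀⟩ ?_
    intro K hK
    rw [← NNReal.coe_le_coe, Real.coe_toNNReal _ hnn, div_le_iff₀ h]
    exact hK.dist_le_mul x y

theorem lipConst_le {f : M → ℝ} {K : ℝ≥0} (hK : LipschitzWith K f) : lipConst f ≤ K :=
  csInf_le (OrderBot.bddBelow _) hK

theorem lipschitzWith_smul {f : M → ℝ} {K : ℝ≥0} (hK : LipschitzWith K f) (c : ℝ) :
    LipschitzWith (‖c‖₊ * K) (c • f) := by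
  rw [lipschitzWith_iff_dist_le_mul] at *
  intro x y
  have : dist ((c • f) x) ((c • f) y) = ‖c‖ * dist (f x) (f y) := by
    simp only [Pi.smul_apply, smul_eq_mul, Real.dist_eq, ← mul_sub, abs_mul, Real.norm_eq_abs]
  rw [this, NNReal.coe_mul, coe_nnnorm, mul_assoc]
  exact mul_le_mul_of_nonneg_left (hK x y) (norm_nonneg c)

variable (M) in
/-- The submodule of `M → ℝ` consisting of Lipschitz functions vanishing at the
base point `z`. -/
def Lip0 (z : M) : Submodule ℝ (M → ℝ) where
  carrier := {f | (∃ K, LipschitzWith K f) ∧ f z = 0}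
  add_mem' := by
    rintro f g ⟨⟨K, hK⟩, hf0⟩ ⟨⟨L, hL⟩, hg0⟩
    exact ⟨⟨K + L, hK.add hL⟩, by simp [hf0, hg0]⟩
  zero_mem' := ⟨⟨0, LipschitzWith.const' 0⟩, rfl⟩
  smul_mem' := by
    rintro c f ⟨⟨K, hK⟩, hf0⟩
    exact ⟨⟨‖c‖₊ * K, lipschitzWith_smul hK c⟩, by simp [hf0]⟩

variable {z : M}

instance : NormedAddCommGroup ↥(Lip0 M z) :=
  AddGroupNorm.toNormedAddCommGroup
    { toFun := fun f => ((lipConst (f : M → ℝ) : ℝ≥0) : ℝ)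
      map_zero' := by
        have h0 : lipConst (0 : M → ℝ) = 0 :=
          le_antisymm (lipConst_le (by simpa using LipschitzWith.const' (0 : ℝ))) bot_le
        show ((lipConst ((0 : ↥(Lip0 M z)) : M → ℝ) : ℝ≥0) : ℝ) = 0
        rw [show ((0 : ↥(Lip0 M z)) : M → ℝ) = 0 from rfl, h0, NNReal.coe_zero]
      add_le' := by
        intro f g
        have hf := lipschitzWith_lipConst f.2.1
        have hg := lipschitzWith_lipConst g.2.1
        have : lipConst ((f + g : ↥(Lip0 M z)) : M → ℝ) ≤
            lipConst (f : M → ℝ) + lipConst (g : M → ℝ) := by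
          refine lipConst_le ?_
          have := hf.add hg
          exact this
        exact_mod_cast this
      neg' := by
        intro f
        show ((lipConst ((-f : ↥(Lip0 M z)) : M → ℝ) : ℝ≥0) : ℝ) = _
        rw [show ((-f : ↥(Lip0 M z)) : M → ℝ) = -(f : M → ℝ) from rfl]
        unfold lipConst
        congr 2
        ext K
        exact ⟨fun hK => by simpa using hK.neg, fun hK => hK.neg⟩
      eq_zero_of_map_eq_zero' := by
        intro f hf
        replace hf : ((lipConst (f : M → ℝ) : ℝ≥0) : ℝ) = 0 := hf
        have h0 : lipConst (f : M → ℝ) = 0 := by exact_mod_cast hf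
        have hl : LipschitzWith 0 (f : M → ℝ) := h0 ▸ lipschitzWith_lipConst f.2.1
        ext x
        have := hl.dist_le_mul x z
        simp only [NNReal.coe_zero, zero_mul] at this
        have hxz : (f : M → ℝ) x = (f : M → ℝ) z :=
          dist_le_zero.mp this
        simpa [f.2.2] using hxz }

theorem Lip0.norm_def (f : ↥(Lip0 M z)) : ‖f‖ = ((lipConst (f : M → ℝ) : ℝ≥0) : ℝ) := rfl

theorem Lip0.lipschitzWith (f : ↥(Lip0 M z)) : LipschitzWith (lipConst (f : M → ℝ)) (f : M → ℝ) :=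
  lipschitzWith_lipConst f.2.1

instance : NormedSpace ℝ ↥(Lip0 M z) where
  norm_smul_le c f := by
    have : lipConst ((c • f : ↥(Lip0 M z)) : M → ℝ) ≤ ‖c‖₊ * lipConst (f : M → ℝ) :=
      lipConst_le (lipschitzWith_smul (Lip0.lipschitzWith f) c)
    calc ‖c • f‖ = ((lipConst ((c • f : ↥(Lip0 M z)) : M → ℝ) : ℝ≥0) : ℝ) := rfl
      _ ≤ ((‖c‖₊ * lipConst (f : M → ℝ) : ℝ≥0) : ℝ) := by exact_mod_cast this
      _ = ‖c‖ * ‖f‖ := by push_cast [Lip0.norm_def]; rfl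

variable (M z) in
/-- The evaluation functional `δ_x ∈ Lip₀(M)*`. -/
def evalδ (x : M) : NormedSpace.Dual ℝ ↥(Lip0 M z) :=
  LinearMap.mkContinuous
    { toFun := fun f => (f : M → ℝ) x
      map_add' := fun f g => rfl
      map_smul' := fun c f => rfl }
    (dist x z)
    (by
      intro f
      have := (Lip0.lipschitzWith f).dist_le_mul x z
      simp only [f.2.2, Real.dist_eq, sub_zero] at this
      calc ‖(f : M → ℝ) x‖ = |(f : M → ℝ) x - 0| := by simp
        _ ≤ (lipConst (f : M → ℝ) : ℝ) * dist x z := by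
            simpa [f.2.2, Real.dist_eq] using (Lip0.lipschitzWith f).dist_le_mul x z
        _ = dist x z * ‖f‖ := by rw [Lip0.norm_def, mul_comm])

variable (M z) in
/-- The Lipschitz-free space over `M`: the closed linear span of the evaluation
functionals inside `Lip₀(M)*`. -/
def FreeSpace : Submodule ℝ (NormedSpace.Dual ℝ ↥(Lip0 M z)) :=
  (Submodule.span ℝ (Set.range (evalδ M z))).topologicalClosure

variable (M z) in
/-- The molecule `m_{x y} = (δ_x - δ_y)/d(x,y)` as an element of `Lip₀(M)*`. -/
def molecule (x y : M) : NormedSpace.Dual ℝ ↥(Lip0 M z) :=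
  (dist x y)⁻¹ • (evalδ M z x - evalδ M z y)

theorem molecule_mem_freeSpace (x y : M) : molecule M z x y ∈ FreeSpace M z :=
  Submodule.le_topologicalClosure _
    (Submodule.smul_mem _ _ (Submodule.sub_mem _
      (Submodule.subset_span ⟨x, rfl⟩) (Submodule.subset_span ⟨y, rfl⟩)))

variable (M z) in
/-- The molecule `m_{x y}` as an element of the free space `F(M)`. -/
def mol (x y : M) : ↥(FreeSpace M z) := ⟨molecule M z x y, molecule_mem_freeSpace x y⟩

variable (M) in
/-- A metric space is uniformly discrete if distances between distinct points are
bounded below by a positive constant. -/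
def UniformlyDiscrete : Prop := ∃ θ > (0:ℝ), ∀ x y : M, x ≠ y → θ ≤ dist x y

/-- A norm-one Lipschitz function is local if its Lipschitz constant is approximated
on pairs of arbitrarily close points. -/
def IsLocal (f : ↥(Lip0 M z)) : Prop :=
  ∀ ε > 0, ∃ u v : M, u ≠ v ∧
    ‖f‖ - ε < ((f : M → ℝ) u - (f : M → ℝ) v) / dist u v ∧ dist u v < ε

/-- `f ∈ S_{Lip₀(M)}` is a w*-Daugavet-point: for every w*-slice `S(μ, α)` of
`B_{Lip₀(M)}` (`μ` a norm-one element of `F(M)`) and every `ε > 0` there is `g` in the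
slice with `‖f - g‖ ≥ 2 - ε`. -/
def IsLipWeakStarDaugavetPoint (f : ↥(Lip0 M z)) : Prop :=
  ∀ μ : NormedSpace.Dual ℝ ↥(Lip0 M z), μ ∈ FreeSpace M z → ‖μ‖ = 1 → ∀ α > (0:ℝ), ∀ ε > (0:ℝ),
    ∃ g : ↥(Lip0 M z), ‖g‖ ≤ 1 ∧ 1 - α < μ g ∧ 2 - ε ≤ ‖f - g‖

/-- `f ∈ S_{Lip₀(M)}` is a w*-Δ-point: the same as above, but only for w*-slices
containing `f`. -/
def IsLipWeakStarDeltaPoint (f : ↥(Lip0 M z)) : Prop :=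
  ∀ μ : NormedSpace.Dual ℝ ↥(Lip0 M z), μ ∈ FreeSpace M z → ‖μ‖ = 1 → ∀ α > (0:ℝ),
    1 - α < μ f → ∀ ε > (0:ℝ),
    ∃ g : ↥(Lip0 M z), ‖g‖ ≤ 1 ∧ 1 - α < μ g ∧ 2 - ε ≤ ‖f - g‖

end DeltaPaper

open DeltaPaper

open Topology

/-!
Fix a nonprincipal ultrafilter `𝒰` on `M`. Boundedness makes the limits
`f x = lim_{y → 𝒰} d(x, y)` and `a = lim_{x → 𝒰} f x` exist, and uniform discreteness gives
`a ≥ θ > 0`. Choosing `u i` recursively inside sets of `𝒰`, so that `|f (u i) - a|` and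
`|d(u i, u j) - f (u i)|` (for all later `j`) are below `a / (2 (i + 1))`, gives
`|d(u i, u j) - a| < a / (i + 1)` for `i < j`.
-/

theorem Filter.exists_seq_mem_forall_lt_mem {α : Type*} {l : Filter α} [l.NeBot]
    {A : ℕ → Set α} (hA : ∀ i, A i ∈ l) {B : ℕ → α → Set α} (hB : ∀ i x, B i x ∈ l) :
    ∃ u : ℕ → α, ∀ i, u i ∈ A i ∧ ∀ j, i < j → u j ∈ B i (u i) := by
  choose g hg using fun (s : {s // s ∈ l}) (i : ℕ) => nonempty_of_mem (inter_mem s.2 (hA i))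
  -- `C i` is the set in which all later terms have to be chosen.
  let C : ℕ → {s // s ∈ l} := fun i =>
    Nat.rec ⟨univ, univ_mem⟩ (fun i s => ⟨s.1 ∩ B i (g s i), inter_mem s.2 (hB _ _)⟩) i
  have hC : Antitone fun i => (C i).1 := antitone_nat_of_succ_le fun _ => inter_subset_left
  exact ⟨fun i => g (C i) i, fun i =>
    ⟨(hg _ _).2, fun j hij => (hC (Nat.succ_le_of_lt hij) (hg (C j) j).1).2⟩⟩

theorem Ultrafilter.exists_tendsto_of_forall_mem {α X : Type*} [TopologicalSpace X]
    (𝒰 : Ultrafilter α) {s : Set X} (hs : IsCompact s) {g : α → X} (hg : ∀ x, g x ∈ s) :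
    ∃ c ∈ s, Tendsto g 𝒰 (𝓝 c) :=
  hs.ultrafilter_le_nhds (𝒰.map g) (le_principal_iff.mpr <| mem_map.mpr <| univ_mem' hg)

theorem Ultrafilter.exists_tendsto_dist_of_isBounded {M : Type*} [PseudoMetricSpace M]
    (hb : Bornology.IsBounded (univ : Set M)) (𝒰 : Ultrafilter M) :
    ∃ (f : M → ℝ) (a : ℝ), (∀ x, Tendsto (dist x) 𝒰 (𝓝 (f x))) ∧ Tendsto f 𝒰 (𝓝 a) := by
  have hdist : ∀ x y : M, dist x y ∈ Icc 0 (diam (univ : Set M)) := fun x y =>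
    ⟨dist_nonneg, dist_le_diam_of_mem hb trivial trivial⟩
  choose f hfs hf using fun x => 𝒰.exists_tendsto_of_forall_mem isCompact_Icc (hdist x)
  obtain ⟨a, -, ha⟩ := 𝒰.exists_tendsto_of_forall_mem isCompact_Icc hfs
  exact ⟨f, a, hf, ha⟩

theorem exists_seq_abs_dist_sub_lt {M : Type*} [PseudoMetricSpace M] {l : Filter M} [l.NeBot]
    {f : M → ℝ} {a : ℝ} (hf : ∀ x, Tendsto (dist x) l (𝓝 (f x))) (ha : Tendsto f l (𝓝 a))
    {ε : ℕ → ℝ} (hε : ∀ i, 0 < ε i) :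
    ∃ u : ℕ → M, ∀ i j, i < j → |dist (u i) (u j) - a| < 2 * ε i := by
  obtain ⟨u, hu⟩ := l.exists_seq_mem_forall_lt_mem (fun i => ha (ball_mem_nhds a (hε i)))
    (fun i x => hf x (ball_mem_nhds (f x) (hε i)))
  refine ⟨u, fun i j hij => ?_⟩
  have hfu : |f (u i) - a| < ε i := (hu i).1
  have hdu : |dist (u i) (u j) - f (u i)| < ε i := (hu i).2 j hij
  calc |dist (u i) (u j) - a| ≤ |dist (u i) (u j) - f (u i)| + |f (u i) - a| := abs_sub_le _ _ _
    _ < 2 * ε i := by linarith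

/-- Lemma 5.5. If `M` is infinite, bounded and uniformly discrete, then
there are `a > 0` and a sequence `(u_i)_{i ≥ 1}` in `M` such that
`a(i-1)/i ≤ d(u_i, u_j) ≤ a(i+1)/i` whenever `i < j`. -/
theorem statement17 {M : Type*} [MetricSpace M] [Infinite M]
    (hb : Bornology.IsBounded (Set.univ : Set M)) (hud : UniformlyDiscrete M) :
    ∃ a > (0:ℝ), ∃ u : ℕ → M, ∀ i j : ℕ, 1 ≤ i → i < j →
      a * ((i : ℝ) - 1) / i ≤ dist (u i) (u j) ∧
      dist (u i) (u j) ≤ a * ((i : ℝ) + 1) / i := by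
  obtain ⟨θ, hθ0, hθ⟩ := hud
  set 𝒰 := Ultrafilter.of (cofinite : Filter M)
  obtain ⟨f, a, hf, ha⟩ := 𝒰.exists_tendsto_dist_of_isBounded hb
  have hθf : ∀ x, θ ≤ f x := fun x => ge_of_tendsto (hf x) <|
    Ultrafilter.of_le _ <| (eventually_cofinite_ne x).mono fun y hy => hθ x y hy.symm
  have ha0 : 0 < a := hθ0.trans_le (ge_of_tendsto' ha hθf)
  obtain ⟨u, hu⟩ := exists_seq_abs_dist_sub_lt hf ha (ε := fun i => a / (2 * (i + 1)))
    fun i => by positivity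
  refine ⟨a, ha0, u, fun i j hi hij => ?_⟩
  have hi0 : (0 : ℝ) < i := by exact_mod_cast hi
  have herr : 2 * (a / (2 * (i + 1))) ≤ a / i := calc
    _ = a / (i + 1) := by field_simp
    _ ≤ a / i := by gcongr; linarith
  obtain ⟨hlow, hupp⟩ := abs_sub_lt_iff.mp (hu i j hij)
  rw [mul_sub_one, mul_add_one, _root_.sub_div, add_div, mul_div_cancel_right₀ a hi0.ne']
  constructor <;> linarith
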